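/- arXiv:math/0407351 — 7 statements merged into one kernel-verified Lean document; each statement's English description precedes it below -/
import Mathlib

section
/- Let Σ be a set of identities of L and let V be the variety defined by Σ. Then every identity belonging to Σ is hyper-satisfied in every structure of V if and only if V is solid. -/
open FirstOrder Language

universe u v w

/-- A hypersubstitution of `L` assigns to each `n`-ary function symbol of `L`
an `L`-term with variables in `Fin n`. -/
def Hypersub (L : FirstOrder.Language.{u, v}) : Type _ :=
  ∀ n : ℕ, L.Functions n → L.Term (Fin n)

variable {L : FirstOrder.Language.{u, v}}

/-- The extension `σ̂` of a hypersubstitution `σ` to all terms. -/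
def Hypersub.apply (σ : Hypersub L) {α : Type w} : L.Term α → L.Term α
  | Term.var x => Term.var x
  | Term.func f ts => Term.subst (σ _ f) (fun i => Hypersub.apply σ (ts i))

/-- The derived structure `A^σ`: same universe, each function symbol `f` is
interpreted by the term function of `σ f` in `A`. -/
def Hypersub.derive (σ : Hypersub L) {A : Type w} (S : L.Structure A) : L.Structure A :=
  letI := S
  { funMap := fun {n} f v => (σ n f).realize v
    RelMap := fun r v => Structure.RelMap r v }

/-- Realization of a term in an explicitly given structure. -/
def realizeIn {A : Type w} (S : L.Structure A) {α : Type*} (a : α → A) (t : L.Term α) : A :=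
  letI := S
  t.realize a

/-- An identity `p = q` of `L` in `k` variables. -/
structure Identity (L : FirstOrder.Language.{u, v}) : Type max u (v + 1) where
  k : ℕ
  lhs : L.Term (Fin k)
  rhs : L.Term (Fin k)

/-- Satisfaction of an identity in a structure. -/
def Identity.Satisfied (e : Identity L) {A : Type w} (S : L.Structure A) : Prop :=
  ∀ a : Fin e.k → A, realizeIn S a e.lhs = realizeIn S a e.rhs

/-- The identity `σ̂ p = σ̂ q`. -/
def Identity.hmap (σ : Hypersub L) (e : Identity L) : Identity L :=
  ⟨e.k, σ.apply e.lhs, σ.apply e.rhs⟩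

/-- An identity is hyper-satisfied if `σ̂ p = σ̂ q` is satisfied for every
hypersubstitution `σ`. -/
def Identity.HyperSatisfied (e : Identity L) {A : Type w} (S : L.Structure A) : Prop :=
  ∀ σ : Hypersub L, (e.hmap σ).Satisfied S

lemma realize_derive_eq {A : Type w} (S : L.Structure A) (σ : Hypersub L) {α : Type*}
    (t : L.Term α) (a : α → A) :
    realizeIn (σ.derive S) a t = realizeIn S a (σ.apply t) := by
  induction t with
  | var x => rfl
  | func f ts ih =>
      show (σ _ f).realize (fun i => realizeIn (σ.derive S) a (ts i)) = _
      simp only [ih]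
      show _ = realizeIn S a (Term.subst (σ _ f) (fun i => σ.apply (ts i)))
      simp [realizeIn, Term.realize_subst]

lemma satisfied_derive_iff {A : Type w} (S : L.Structure A) (σ : Hypersub L)
    (e : Identity L) : e.Satisfied (σ.derive S) ↔ (e.hmap σ).Satisfied S := by
  unfold Identity.Satisfied Identity.hmap
  simp [realize_derive_eq]

/-- Let `Γ` be a set of identities of `L` and let `V` be the
variety defined by `Γ`. Then every identity belonging to `Γ` is hyper-satisfied
in every structure of `V` if and only if `V` is solid. -/
theorem identity_hyperbasis_iff_solid {L : FirstOrder.Language.{u, v}} [L.IsAlgebraic]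
    (Γ : Set (Identity L)) :
    (∀ e ∈ Γ, ∀ (A : Type w) (S : L.Structure A),
        (∀ e' ∈ Γ, e'.Satisfied S) → e.HyperSatisfied S) ↔
    (∀ (A : Type w) (S : L.Structure A), (∀ e' ∈ Γ, e'.Satisfied S) →
        ∀ σ : Hypersub L, ∀ e' ∈ Γ, e'.Satisfied (σ.derive S)) := by
  constructor
  · intro h A S hS σ e' he'
    exact (satisfied_derive_iff S σ e').mpr (h e' he' A S hS σ)
  · intro h e he A S hS σ
    exact (satisfied_derive_iff S σ e).mp (h A S hS σ e he)
end

section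
/- If Σ is a set of identities of L that is closed under the hypersubstitution rule (i.e., for every identity (p, q) ∈ Σ and every hypersubstitution σ of L, the identity (σ̂p, σ̂q) also belongs to Σ), then E(Σ) = E^H(Σ): an identity is derivable from Σ by the rules (1)–(5) if and only if it is derivable from Σ by the rules (1)–(5) together with the hypersubstitution rule (6). -/
open FirstOrder Language

universe u v w

variable {L : FirstOrder.Language.{u, v}}

/-- Birkhoff's rules of inference (1)-(5): the equational consequence operator `E`.
`EqDeriv Γ e` means the identity `e` is derivable from `Γ` by reflexivity, symmetry,
transitivity, substitution and replacement. -/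
inductive EqDeriv (Γ : Set (Identity L)) : Identity L → Prop
  | base {e : Identity L} : e ∈ Γ → EqDeriv Γ e
  | refl (k : ℕ) (p : L.Term (Fin k)) : EqDeriv Γ ⟨k, p, p⟩
  | symm {k : ℕ} {p q : L.Term (Fin k)} : EqDeriv Γ ⟨k, p, q⟩ → EqDeriv Γ ⟨k, q, p⟩
  | trans {k : ℕ} {p q r : L.Term (Fin k)} :
      EqDeriv Γ ⟨k, p, q⟩ → EqDeriv Γ ⟨k, q, r⟩ → EqDeriv Γ ⟨k, p, r⟩
  | subst {k m : ℕ} {p q : L.Term (Fin k)} (h : Fin k → L.Term (Fin m)) :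
      EqDeriv Γ ⟨k, p, q⟩ → EqDeriv Γ ⟨m, p.subst h, q.subst h⟩
  | replace {n : ℕ} (f : L.Functions n) {k : ℕ} {p q : Fin n → L.Term (Fin k)} :
      (∀ i, EqDeriv Γ ⟨k, p i, q i⟩) → EqDeriv Γ ⟨k, Term.func f p, Term.func f q⟩

/-- Rules (1)-(5) together with the hypersubstitution rule (6):
the operator `E^H`. -/
inductive EqDerivH (Γ : Set (Identity L)) : Identity L → Prop
  | base {e : Identity L} : e ∈ Γ → EqDerivH Γ e
  | refl (k : ℕ) (p : L.Term (Fin k)) : EqDerivH Γ ⟨k, p, p⟩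
  | symm {k : ℕ} {p q : L.Term (Fin k)} : EqDerivH Γ ⟨k, p, q⟩ → EqDerivH Γ ⟨k, q, p⟩
  | trans {k : ℕ} {p q r : L.Term (Fin k)} :
      EqDerivH Γ ⟨k, p, q⟩ → EqDerivH Γ ⟨k, q, r⟩ → EqDerivH Γ ⟨k, p, r⟩
  | subst {k m : ℕ} {p q : L.Term (Fin k)} (h : Fin k → L.Term (Fin m)) :
      EqDerivH Γ ⟨k, p, q⟩ → EqDerivH Γ ⟨m, p.subst h, q.subst h⟩
  | replace {n : ℕ} (f : L.Functions n) {k : ℕ} {p q : Fin n → L.Term (Fin k)} :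
      (∀ i, EqDerivH Γ ⟨k, p i, q i⟩) → EqDerivH Γ ⟨k, Term.func f p, Term.func f q⟩
  | hyper {k : ℕ} {p q : L.Term (Fin k)} (σ : Hypersub L) :
      EqDerivH Γ ⟨k, p, q⟩ → EqDerivH Γ ⟨k, σ.apply p, σ.apply q⟩


section Aux
variable {L : FirstOrder.Language.{u, v}}

lemma Term.subst_subst {α β γ : Type*} (t : L.Term α) (f : α → L.Term β) (g : β → L.Term γ) :
    (t.subst f).subst g = t.subst (fun x => (f x).subst g) := by
  induction t with
  | var => rfl
  | func fn ts ih => simp only [Term.subst]; exact congrArg _ (funext fun i => ih i)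

lemma Hypersub.apply_subst (σ : Hypersub L) {k m : ℕ} (t : L.Term (Fin k))
    (h : Fin k → L.Term (Fin m)) :
    σ.apply (t.subst h) = (σ.apply t).subst (fun x => σ.apply (h x)) := by
  induction t with
  | var => rfl
  | func fn ts ih =>
      simp only [Term.subst, Hypersub.apply, Term.subst_subst]
      exact congrArg _ (funext fun i => ih i)

lemma eqDeriv_subst_congr {Γ : Set (Identity L)} {k n : ℕ} {u v : Fin n → L.Term (Fin k)}
    (h : ∀ i, EqDeriv Γ ⟨k, u i, v i⟩) (t : L.Term (Fin n)) :
    EqDeriv Γ ⟨k, t.subst u, t.subst v⟩ := by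
  induction t with
  | var x => exact h x
  | func fn ts ih => exact EqDeriv.replace fn fun i => ih i

lemma eqDeriv_hmap {Γ : Set (Identity L)}
    (hcl : ∀ e ∈ Γ, ∀ σ : Hypersub L, e.hmap σ ∈ Γ) (σ : Hypersub L)
    {e : Identity L} (h : EqDeriv Γ e) : EqDeriv Γ (e.hmap σ) := by
  induction h with
  | base he => exact EqDeriv.base (hcl _ he σ)
  | refl k p => exact EqDeriv.refl k _
  | symm _ ih => exact EqDeriv.symm ih
  | trans _ _ ih1 ih2 => exact EqDeriv.trans ih1 ih2
  | subst hs _ ih =>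
      simp only [Identity.hmap, Hypersub.apply_subst]
      exact EqDeriv.subst _ ih
  | replace fn _ ih =>
      simp only [Identity.hmap, Hypersub.apply]
      exact eqDeriv_subst_congr (fun i => ih i) (σ _ fn)

end Aux

/-- If `Γ` is a set of identities closed under the hypersubstitution
rule, then `E(Γ) = E^H(Γ)`. -/
theorem eqDeriv_eq_eqDerivH {L : FirstOrder.Language.{u, v}} [L.IsAlgebraic]
    (Γ : Set (Identity L))
    (hcl : ∀ e ∈ Γ, ∀ σ : Hypersub L, e.hmap σ ∈ Γ) :
    ∀ e : Identity L, EqDeriv Γ e ↔ EqDerivH Γ e := by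
  intro e
  constructor
  · intro h
    induction h with
    | base he => exact EqDerivH.base he
    | refl k p => exact EqDerivH.refl k p
    | symm _ ih => exact EqDerivH.symm ih
    | trans _ _ ih1 ih2 => exact EqDerivH.trans ih1 ih2
    | subst hs _ ih => exact EqDerivH.subst hs ih
    | replace fn _ ih => exact EqDerivH.replace fn fun i => ih i
  · intro h
    induction h with
    | base he => exact EqDeriv.base he
    | refl k p => exact EqDeriv.refl k p
    | symm _ ih => exact EqDeriv.symm ih
    | trans _ _ ih1 ih2 => exact EqDeriv.trans ih1 ih2
    | subst hs _ ih => exact EqDeriv.subst hs ih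
    | replace fn _ ih => exact EqDeriv.replace fn fun i => ih i
    | hyper σ _ ih => exact eqDeriv_hmap hcl σ ih
end

section
/- Let M be a monoid of hypersubstitutions of L, let Σ be a set of quasi-identities of L, and let QV be the quasivariety defined by Σ. If QV is M-solid, then a quasi-identity e is satisfied in every structure of QV if and only if e is M-hyper-satisfied in every structure of QV. -/
open FirstOrder Language

universe u v w

variable {L : FirstOrder.Language.{u, v}}

/-- A quasi-identity of `L` in `k` variables with `n` premises:
`(t₀ = s₀ ∧ ⋯ ∧ t_{n-1} = s_{n-1}) → (tₙ = sₙ)`. -/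
structure QuasiIdentity (L : FirstOrder.Language.{u, v}) : Type max u (v + 1) where
  k : ℕ
  n : ℕ
  lhs : Fin n → L.Term (Fin k)
  rhs : Fin n → L.Term (Fin k)
  lhsC : L.Term (Fin k)
  rhsC : L.Term (Fin k)

/-- Satisfaction of a quasi-identity in a structure. -/
def QuasiIdentity.Satisfied (e : QuasiIdentity L) {A : Type w} (S : L.Structure A) : Prop :=
  ∀ a : Fin e.k → A,
    (∀ i, realizeIn S a (e.lhs i) = realizeIn S a (e.rhs i)) →
      realizeIn S a e.lhsC = realizeIn S a e.rhsC

/-- The quasi-identity `σ(e)` obtained by applying `σ̂` to every term of `e`. -/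
def QuasiIdentity.hmap (σ : Hypersub L) (e : QuasiIdentity L) : QuasiIdentity L :=
  ⟨e.k, e.n, fun i => σ.apply (e.lhs i), fun i => σ.apply (e.rhs i),
    σ.apply e.lhsC, σ.apply e.rhsC⟩

/-- A quasi-identity is `M`-hyper-satisfied if `σ(e)` is satisfied for every `σ ∈ M`. -/
def QuasiIdentity.MHyperSatisfied (M : Set (Hypersub L)) (e : QuasiIdentity L)
    {A : Type w} (S : L.Structure A) : Prop :=
  ∀ σ ∈ M, (e.hmap σ).Satisfied S

/-- The identity hypersubstitution `σ_id`, with `σ_id f = f(x₀, …, x_{n-1})`. -/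
def Hypersub.id (L : FirstOrder.Language.{u, v}) : Hypersub L :=
  fun _n f => Term.func f (fun i => Term.var i)

/-- Composition of hypersubstitutions: `(σ ∘ ρ) f = σ̂ (ρ f)`. -/
def Hypersub.comp (σ ρ : Hypersub L) : Hypersub L :=
  fun n f => σ.apply (ρ n f)

/-- `M` is a monoid of hypersubstitutions: it contains the identity
hypersubstitution and is closed under composition. -/
def IsHypersubMonoid (M : Set (Hypersub L)) : Prop :=
  Hypersub.id L ∈ M ∧ ∀ σ ∈ M, ∀ ρ ∈ M, σ.comp ρ ∈ M

/-! The realization of `σ̂ t` in `A` is the realization of `t` in the derived structure `A^σ`,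
so `σ(e)` holds in `A` exactly when `e` holds in `A^σ`. Solidity keeps `A^σ` inside the
quasivariety, and `σ_id ∈ M` recovers `e` from its hyper-satisfaction. -/

namespace Hypersub

theorem realizeIn_apply {A : Type*} (S : L.Structure A) (σ : Hypersub L)
    {α : Type*} (a : α → A) (t : L.Term α) :
    realizeIn S a (σ.apply t) = realizeIn (σ.derive S) a t := by
  induction t with
  | var x => rfl
  | func f ts ih =>
    let _ := S
    simp only [Hypersub.apply, realizeIn, Term.realize_subst, Term.realize]
    exact congrArg (Term.realize · (σ _ f)) (funext ih)

theorem apply_id {α : Type*} (t : L.Term α) : (Hypersub.id L).apply t = t := by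
  induction t with
  | var x => rfl
  | func f ts ih =>
    simp only [Hypersub.apply, Hypersub.id, Term.subst]
    exact congrArg (Term.func f) (funext ih)

end Hypersub

namespace QuasiIdentity

theorem satisfied_hmap_iff (σ : Hypersub L) (e : QuasiIdentity L) {A : Type*}
    (S : L.Structure A) : (e.hmap σ).Satisfied S ↔ e.Satisfied (σ.derive S) := by
  simp only [Satisfied, hmap, Hypersub.realizeIn_apply]

theorem hmap_id (e : QuasiIdentity L) : e.hmap (Hypersub.id L) = e := by
  simp only [hmap, Hypersub.apply_id]

end QuasiIdentity

theorem M_solid_satisfied_iff_M_hyperSatisfied_general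
    {L : FirstOrder.Language.{u, v}}
    (M : Set (Hypersub L)) (hM : IsHypersubMonoid M) (Γ : Set (QuasiIdentity L))
    (hsolid : ∀ (A : Type w) (S : L.Structure A), (∀ e' ∈ Γ, e'.Satisfied S) →
        ∀ σ ∈ M, ∀ e' ∈ Γ, e'.Satisfied (Hypersub.derive σ S))
    (e : QuasiIdentity L) :
    (∀ (A : Type w) (S : L.Structure A), (∀ e' ∈ Γ, e'.Satisfied S) → e.Satisfied S) ↔
    (∀ (A : Type w) (S : L.Structure A), (∀ e' ∈ Γ, e'.Satisfied S) →
        e.MHyperSatisfied M S) := by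
  constructor
  · intro h A S hS σ hσ
    exact (e.satisfied_hmap_iff σ S).2 (h A _ (hsolid A S hS σ hσ))
  · intro h A S hS
    simpa only [QuasiIdentity.hmap_id] using h A S hS (Hypersub.id L) hM.1

/-- If the quasivariety `QV` defined by `Γ` is `M`-solid, then a
quasi-identity `e` is satisfied in every structure of `QV` if and only if `e` is
`M`-hyper-satisfied in every structure of `QV`. -/
theorem M_solid_satisfied_iff_M_hyperSatisfied
    {L : FirstOrder.Language.{u, v}} [L.IsAlgebraic]
    (M : Set (Hypersub L)) (hM : IsHypersubMonoid M) (Γ : Set (QuasiIdentity L))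
    (hsolid : ∀ (A : Type w) (S : L.Structure A), (∀ e' ∈ Γ, e'.Satisfied S) →
        ∀ σ ∈ M, ∀ e' ∈ Γ, e'.Satisfied (Hypersub.derive σ S))
    (e : QuasiIdentity L) :
    (∀ (A : Type w) (S : L.Structure A), (∀ e' ∈ Γ, e'.Satisfied S) → e.Satisfied S) ↔
    (∀ (A : Type w) (S : L.Structure A), (∀ e' ∈ Γ, e'.Satisfied S) →
        e.MHyperSatisfied M S) :=
  M_solid_satisfied_iff_M_hyperSatisfied_general M hM Γ hsolid e
end

section
/- Let M be a monoid of hypersubstitutions of L, let Σ be a set of identities of L, and let V be the variety defined by Σ. If V is M-solid, then an identity p = q is satisfied in every structure of V if and only if it is M-hyper-satisfied in every structure of V. -/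
open FirstOrder Language

universe u v w

variable {L : FirstOrder.Language.{u, v}}

/-- An identity is `M`-hyper-satisfied if `σ̂ p = σ̂ q` is satisfied for every `σ ∈ M`. -/
def Identity.MHyperSatisfied (M : Set (Hypersub L)) (e : Identity L)
    {A : Type w} (S : L.Structure A) : Prop :=
  ∀ σ ∈ M, (e.hmap σ).Satisfied S

theorem Hypersub.id_apply {α : Type w} (t : L.Term α) : (Hypersub.id L).apply t = t := by
  induction t with
  | var x => rfl
  | func f ts ih => exact congrArg _ (funext ih)

theorem realizeIn_derive {A : Type w} (S : L.Structure A) (σ : Hypersub L)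
    {α : Type*} (a : α → A) (t : L.Term α) :
    realizeIn (σ.derive S) a t = realizeIn S a (σ.apply t) := by
  induction t with
  | var x => rfl
  | func f ts ih =>
      let _ := S
      show (σ _ f).realize (fun i => realizeIn (σ.derive S) a (ts i))
        = ((σ _ f).subst fun i => σ.apply (ts i)).realize a
      rw [Term.realize_subst]
      exact congrArg (Term.realize · (σ _ f)) (funext ih)

theorem Identity.hmap_id (e : Identity L) : e.hmap (Hypersub.id L) = e := by
  simp only [Identity.hmap, Hypersub.id_apply]

theorem Identity.satisfied_hmap_iff (σ : Hypersub L) (e : Identity L) {A : Type w}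
    (S : L.Structure A) : (e.hmap σ).Satisfied S ↔ e.Satisfied (σ.derive S) := by
  simp only [Identity.Satisfied, Identity.hmap, realizeIn_derive]

theorem Identity.MHyperSatisfied.satisfied {M : Set (Hypersub L)} (hid : Hypersub.id L ∈ M)
    {e : Identity L} {A : Type w} {S : L.Structure A} (h : e.MHyperSatisfied M S) :
    e.Satisfied S :=
  e.hmap_id ▸ h _ hid

theorem identity_M_solid_satisfied_iff_M_hyperSatisfied_general
    {L : FirstOrder.Language.{u, v}}
    (M : Set (Hypersub L)) (hM : IsHypersubMonoid M) (Γ : Set (Identity L))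
    (hsolid : ∀ (A : Type w) (S : L.Structure A), (∀ e' ∈ Γ, e'.Satisfied S) →
        ∀ σ ∈ M, ∀ e' ∈ Γ, e'.Satisfied (Hypersub.derive σ S))
    (e : Identity L) :
    (∀ (A : Type w) (S : L.Structure A), (∀ e' ∈ Γ, e'.Satisfied S) → e.Satisfied S) ↔
    (∀ (A : Type w) (S : L.Structure A), (∀ e' ∈ Γ, e'.Satisfied S) →
        e.MHyperSatisfied M S) :=
  ⟨fun h A S hS σ hσ => (e.satisfied_hmap_iff σ S).2 (h A _ (hsolid A S hS σ hσ)),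
    fun h A S hS => (h A S hS).satisfied hM.1⟩

/-- If the variety `V` defined by `Γ` is `M`-solid, then an
identity `e` is satisfied in every structure of `V` if and only if it is
`M`-hyper-satisfied in every structure of `V`. -/
theorem identity_M_solid_satisfied_iff_M_hyperSatisfied
    {L : FirstOrder.Language.{u, v}} [L.IsAlgebraic]
    (M : Set (Hypersub L)) (hM : IsHypersubMonoid M) (Γ : Set (Identity L))
    (hsolid : ∀ (A : Type w) (S : L.Structure A), (∀ e' ∈ Γ, e'.Satisfied S) →
        ∀ σ ∈ M, ∀ e' ∈ Γ, e'.Satisfied (Hypersub.derive σ S))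
    (e : Identity L) :
    (∀ (A : Type w) (S : L.Structure A), (∀ e' ∈ Γ, e'.Satisfied S) → e.Satisfied S) ↔
    (∀ (A : Type w) (S : L.Structure A), (∀ e' ∈ Γ, e'.Satisfied S) →
        e.MHyperSatisfied M S) :=
  identity_M_solid_satisfied_iff_M_hyperSatisfied_general M hM Γ hsolid e
end

section
/- Let A be a set with a binary operation · satisfying (S1) x·(y·z) = (x·y)·z, (S2) x·x = x, (S3) (x·y)·(u·v) = (x·u)·(y·v) for all elements, and (S4) for all x, y ∈ A, x·y = y·x implies x = y. Then for every binary term t over the signature {·} (a term in two variables) with term function t^A : A → A → A, and for all a, b, c, u, v ∈ A: t^A(a, t^A(b, c)) = t^A(t^A(a, b), c), t^A(a, a) = a, and t^A(t^A(a, b), t^A(u, v)) = t^A(t^A(a, u), t^A(b, v)). That is, the identities (S1), (S2), (S3) are satisfied as hyperidentities in the quasivariety defined by (S1)–(S4). -/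
/-- Binary terms over the signature of one binary operation symbol `·`,
with two variables `x` and `y`. -/
inductive BTerm : Type
  | x : BTerm
  | y : BTerm
  | op : BTerm → BTerm → BTerm

/-- The term function `t^A : A → A → A` of a binary term `t` in an algebra
`(A, m)` with one binary operation `m`. -/
def BTerm.eval {A : Type*} (m : A → A → A) : BTerm → A → A → A
  | BTerm.x, a, _ => a
  | BTerm.y, _, b => b
  | BTerm.op p q, a, b => m (BTerm.eval m p a b) (BTerm.eval m q a b)

section Aux

variable {A : Type*} {m : A → A → A}

lemma la (S1 : ∀ x y z : A, m x (m y z) = m (m x y) z) (S2 : ∀ x : A, m x x = x)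
    (x y : A) : m x (m x y) = m x y := by rw [S1, S2]

lemma ra (S1 : ∀ x y z : A, m x (m y z) = m (m x y) z) (S2 : ∀ x : A, m x x = x)
    (x y : A) : m (m x y) y = m x y := by rw [← S1, S2]

lemma phi_comm (S1 : ∀ x y z : A, m x (m y z) = m (m x y) z)
    (S3 : ∀ x y u v : A, m (m x y) (m u v) = m (m x u) (m y v))
    (a u v : A) : m (m a (m u v)) a = m (m a (m v u)) a := by
  rw [S1 a u v, ← S1 (m a u) v a, S3 a u v a, S1 (m a v) u a, ← S1 a v u]

lemma phi_dropR (S1 : ∀ x y z : A, m x (m y z) = m (m x y) z) (S2 : ∀ x : A, m x x = x)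
    (a w : A) : m (m a (m w a)) a = m (m a w) a := by
  rw [S1 a w a, ra S1 S2 (m a w) a]

lemma I15 (S1 : ∀ x y z : A, m x (m y z) = m (m x y) z) (S2 : ∀ x : A, m x x = x)
    (a b : A) : m a (m (m a b) a) = m (m a b) a := by
  rw [S1 a (m a b) a, la S1 S2 a b]

lemma I16 (S1 : ∀ x y z : A, m x (m y z) = m (m x y) z) (S2 : ∀ x : A, m x x = x)
    (a b : A) : m a (m (m b a) b) = m a b := by
  rw [S1 a (m b a) b, S1 a b a, ← S1 (m a b) a b, S2 (m a b)]

lemma I34 (S1 : ∀ x y z : A, m x (m y z) = m (m x y) z) (S2 : ∀ x : A, m x x = x)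
    (a b : A) : m (m a b) (m b a) = m (m a b) a := by
  rw [S1 (m a b) b a, ra S1 S2 a b]

lemma I36 (S1 : ∀ x y z : A, m x (m y z) = m (m x y) z) (S2 : ∀ x : A, m x x = x)
    (a b : A) : m (m a b) (m (m b a) b) = m a b := by
  rw [S1 (m a b) (m b a) b, I34 S1 S2 a b, ← S1 (m a b) a b, S2 (m a b)]

lemma I52 (S1 : ∀ x y z : A, m x (m y z) = m (m x y) z) (S2 : ∀ x : A, m x x = x)
    (a b : A) : m (m (m a b) a) b = m a b := by
  rw [← S1 (m a b) a b, S2 (m a b)]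

lemma I53 (S1 : ∀ x y z : A, m x (m y z) = m (m x y) z) (S2 : ∀ x : A, m x x = x)
    (a b : A) : m (m (m a b) a) (m a b) = m a b := by
  rw [← S1 (m a b) a (m a b), la S1 S2 a b, S2 (m a b)]

lemma I54 (S1 : ∀ x y z : A, m x (m y z) = m (m x y) z) (S2 : ∀ x : A, m x x = x)
    (a b : A) : m (m (m a b) a) (m b a) = m (m a b) a := by
  rw [← S1 (m a b) a (m b a), S1 a b a, la S1 S2 (m a b) a]

lemma I56 (S1 : ∀ x y z : A, m x (m y z) = m (m x y) z) (S2 : ∀ x : A, m x x = x)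
    (a b : A) : m (m (m a b) a) (m (m b a) b) = m a b := by
  rw [S1 (m (m a b) a) (m b a) b, I54 S1 S2 a b, I52 S1 S2 a b]

end Aux

section Aux2
variable {A : Type*} {m : A → A → A}

/-- `r a (r b c) = r (r a b) c` for the sandwich operation `r x y = m (m x y) x`. -/
lemma sandT1 (S1 : ∀ x y z : A, m x (m y z) = m (m x y) z) (S2 : ∀ x : A, m x x = x)
    (S3 : ∀ x y u v : A, m (m x y) (m u v) = m (m x u) (m y v))
    (a b c : A) :
    m (m a (m (m b c) b)) a = m (m (m (m a b) a) c) (m (m a b) a) := by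
  rw [phi_comm S1 S3 a (m b c) b, la S1 S2 b c]
  rw [show m (m a b) a = m a (m b a) from (S1 a b a).symm]
  rw [← S1 a (m b a) c]
  rw [S1 (m a (m (m b a) c)) a (m b a)]
  rw [phi_comm S1 S3 a (m b a) c]
  rw [S1 c b a]
  rw [phi_dropR S1 S2 a (m c b)]
  rw [S3 (m a (m c b)) a b a]
  rw [S2 a]
  rw [← S1 a (m c b) b]
  rw [ra S1 S2 c b]
  rw [phi_comm S1 S3 a c b]

lemma G2 (S1 : ∀ x y z : A, m x (m y z) = m (m x y) z) (S2 : ∀ x : A, m x x = x)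
    (S3 : ∀ x y u v : A, m (m x y) (m u v) = m (m x u) (m y v))
    (a b Z : A) :
    m (m (m (m a b) a) Z) (m (m a b) a) = m (m a (m b Z)) a := by
  rw [show m (m a b) a = m a (m b a) from (S1 a b a).symm]
  rw [← S1 a (m b a) Z]
  rw [S1 (m a (m (m b a) Z)) a (m b a)]
  rw [S3 (m a (m (m b a) Z)) a b a]
  rw [S2 a]
  rw [← S1 a (m (m b a) Z) b]
  rw [phi_comm S1 S3 a (m (m b a) Z) b]
  rw [S1 b (m b a) Z]
  rw [la S1 S2 b a]
  rw [phi_comm S1 S3 a (m b a) Z]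
  rw [S1 Z b a]
  rw [phi_dropR S1 S2 a (m Z b)]
  rw [phi_comm S1 S3 a Z b]

/-- `r (r a b) (r u v) = r (r a u) (r b v)` for `r x y = m (m x y) x`. -/
lemma sandT3 (S1 : ∀ x y z : A, m x (m y z) = m (m x y) z) (S2 : ∀ x : A, m x x = x)
    (S3 : ∀ x y u v : A, m (m x y) (m u v) = m (m x u) (m y v))
    (a b u v : A) :
    m (m (m (m a b) a) (m (m u v) u)) (m (m a b) a)
      = m (m (m (m a u) a) (m (m b v) b)) (m (m a u) a) := by
  rw [G2 S1 S2 S3 a b (m (m u v) u), G2 S1 S2 S3 a u (m (m b v) b)]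
  rw [phi_comm S1 S3 a b (m (m u v) u)]
  rw [← S1 (m u v) u b]
  rw [S3 u v u b]
  rw [S2 u]
  rw [show m (m b v) b = m b (m v b) from (S1 b v b).symm]
  rw [S1 u b (m v b)]
  rw [S3 u b v b]
  rw [S2 b]
  rw [phi_comm S1 S3 a (m u v) b]
  rw [S1 b u v]
  rw [phi_comm S1 S3 a u (m v b)]
  rw [← S1 v b u]
  rw [phi_comm S1 S3 a v (m b u)]

end Aux2

section Classify
variable {A : Type*} {m : A → A → A}

/-- Every binary term function over an idempotent semigroup is one of the six
elements of the free band on two generators. -/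
lemma classify (S1 : ∀ x y z : A, m x (m y z) = m (m x y) z) (S2 : ∀ x : A, m x x = x)
    (t : BTerm) :
    (∀ a b : A, t.eval m a b = a) ∨
    (∀ a b : A, t.eval m a b = b) ∨
    (∀ a b : A, t.eval m a b = m a b) ∨
    (∀ a b : A, t.eval m a b = m b a) ∨
    (∀ a b : A, t.eval m a b = m (m a b) a) ∨
    (∀ a b : A, t.eval m a b = m (m b a) b) := by
  induction t with
  | x => exact Or.inl fun a b => rfl
  | y => exact Or.inr (Or.inl fun a b => rfl)
  | op p q hp hq =>
    rcases hp with hp | hp | hp | hp | hp | hp <;>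
      rcases hq with hq | hq | hq | hq | hq | hq
    -- row 1 : p = a
    · exact Or.inl fun a b => by simp only [BTerm.eval, hp, hq, S2]
    · exact Or.inr (Or.inr (Or.inl fun a b => by simp only [BTerm.eval, hp, hq]))
    · exact Or.inr (Or.inr (Or.inl fun a b => by
        simp only [BTerm.eval, hp, hq]; exact la S1 S2 a b))
    · exact Or.inr (Or.inr (Or.inr (Or.inr (Or.inl fun a b => by
        simp only [BTerm.eval, hp, hq]; exact S1 a b a))))
    · exact Or.inr (Or.inr (Or.inr (Or.inr (Or.inl fun a b => by
        simp only [BTerm.eval, hp, hq]; exact I15 S1 S2 a b))))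
    · exact Or.inr (Or.inr (Or.inl fun a b => by
        simp only [BTerm.eval, hp, hq]; exact I16 S1 S2 a b))
    -- row 2 : p = b
    · exact Or.inr (Or.inr (Or.inr (Or.inl fun a b => by
        simp only [BTerm.eval, hp, hq])))
    · exact Or.inr (Or.inl fun a b => by simp only [BTerm.eval, hp, hq, S2])
    · exact Or.inr (Or.inr (Or.inr (Or.inr (Or.inr fun a b => by
        simp only [BTerm.eval, hp, hq]; exact S1 b a b))))
    · exact Or.inr (Or.inr (Or.inr (Or.inl fun a b => by
        simp only [BTerm.eval, hp, hq]; exact la S1 S2 b a)))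
    · exact Or.inr (Or.inr (Or.inr (Or.inl fun a b => by
        simp only [BTerm.eval, hp, hq]; exact I16 S1 S2 b a)))
    · exact Or.inr (Or.inr (Or.inr (Or.inr (Or.inr fun a b => by
        simp only [BTerm.eval, hp, hq]; exact I15 S1 S2 b a))))
    -- row 3 : p = m a b
    · exact Or.inr (Or.inr (Or.inr (Or.inr (Or.inl fun a b => by
        simp only [BTerm.eval, hp, hq]))))
    · exact Or.inr (Or.inr (Or.inl fun a b => by
        simp only [BTerm.eval, hp, hq]; exact ra S1 S2 a b))
    · exact Or.inr (Or.inr (Or.inl fun a b => by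
        simp only [BTerm.eval, hp, hq]; exact S2 (m a b)))
    · exact Or.inr (Or.inr (Or.inr (Or.inr (Or.inl fun a b => by
        simp only [BTerm.eval, hp, hq]; exact I34 S1 S2 a b))))
    · exact Or.inr (Or.inr (Or.inr (Or.inr (Or.inl fun a b => by
        simp only [BTerm.eval, hp, hq]; exact la S1 S2 (m a b) a))))
    · exact Or.inr (Or.inr (Or.inl fun a b => by
        simp only [BTerm.eval, hp, hq]; exact I36 S1 S2 a b))
    -- row 4 : p = m b a
    · exact Or.inr (Or.inr (Or.inr (Or.inl fun a b => by
        simp only [BTerm.eval, hp, hq]; exact ra S1 S2 b a)))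
    · exact Or.inr (Or.inr (Or.inr (Or.inr (Or.inr fun a b => by
        simp only [BTerm.eval, hp, hq]))))
    · exact Or.inr (Or.inr (Or.inr (Or.inr (Or.inr fun a b => by
        simp only [BTerm.eval, hp, hq]; exact I34 S1 S2 b a))))
    · exact Or.inr (Or.inr (Or.inr (Or.inl fun a b => by
        simp only [BTerm.eval, hp, hq]; exact S2 (m b a))))
    · exact Or.inr (Or.inr (Or.inr (Or.inl fun a b => by
        simp only [BTerm.eval, hp, hq]; exact I36 S1 S2 b a)))
    · exact Or.inr (Or.inr (Or.inr (Or.inr (Or.inr fun a b => by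
        simp only [BTerm.eval, hp, hq]; exact la S1 S2 (m b a) b))))
    -- row 5 : p = m (m a b) a
    · exact Or.inr (Or.inr (Or.inr (Or.inr (Or.inl fun a b => by
        simp only [BTerm.eval, hp, hq]; exact ra S1 S2 (m a b) a))))
    · exact Or.inr (Or.inr (Or.inl fun a b => by
        simp only [BTerm.eval, hp, hq]; exact I52 S1 S2 a b))
    · exact Or.inr (Or.inr (Or.inl fun a b => by
        simp only [BTerm.eval, hp, hq]; exact I53 S1 S2 a b))
    · exact Or.inr (Or.inr (Or.inr (Or.inr (Or.inl fun a b => by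
        simp only [BTerm.eval, hp, hq]; exact I54 S1 S2 a b))))
    · exact Or.inr (Or.inr (Or.inr (Or.inr (Or.inl fun a b => by
        simp only [BTerm.eval, hp, hq]; exact S2 (m (m a b) a)))))
    · exact Or.inr (Or.inr (Or.inl fun a b => by
        simp only [BTerm.eval, hp, hq]; exact I56 S1 S2 a b))
    -- row 6 : p = m (m b a) b
    · exact Or.inr (Or.inr (Or.inr (Or.inl fun a b => by
        simp only [BTerm.eval, hp, hq]; exact I52 S1 S2 b a)))
    · exact Or.inr (Or.inr (Or.inr (Or.inr (Or.inr fun a b => by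
        simp only [BTerm.eval, hp, hq]; exact ra S1 S2 (m b a) b))))
    · exact Or.inr (Or.inr (Or.inr (Or.inr (Or.inr fun a b => by
        simp only [BTerm.eval, hp, hq]; exact I54 S1 S2 b a))))
    · exact Or.inr (Or.inr (Or.inr (Or.inl fun a b => by
        simp only [BTerm.eval, hp, hq]; exact I53 S1 S2 b a)))
    · exact Or.inr (Or.inr (Or.inr (Or.inl fun a b => by
        simp only [BTerm.eval, hp, hq]; exact I56 S1 S2 b a)))
    · exact Or.inr (Or.inr (Or.inr (Or.inr (Or.inr fun a b => by
        simp only [BTerm.eval, hp, hq]; exact S2 (m (m b a) b)))))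

end Classify

/-- In any algebra `(A, m)` satisfying (S1)-(S4), every binary
term function `t^A` again satisfies (S1), (S2) and (S3): the identities
(S1), (S2), (S3) hold as hyperidentities in the quasivariety defined by (S1)-(S4). -/
theorem hyperidentities_S1_S2_S3 {A : Type*} (m : A → A → A)
    (S1 : ∀ x y z : A, m x (m y z) = m (m x y) z)
    (S2 : ∀ x : A, m x x = x)
    (S3 : ∀ x y u v : A, m (m x y) (m u v) = m (m x u) (m y v))
    (S4 : ∀ x y : A, m x y = m y x → x = y)
    (t : BTerm) :
    (∀ a b c : A, t.eval m a (t.eval m b c) = t.eval m (t.eval m a b) c) ∧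
    (∀ a : A, t.eval m a a = a) ∧
    (∀ a b u v : A,
      t.eval m (t.eval m a b) (t.eval m u v) = t.eval m (t.eval m a u) (t.eval m b v)) := by
  rcases classify S1 S2 t with h | h | h | h | h | h
  · exact ⟨fun a b c => by simp only [h], fun a => by simp only [h],
      fun a b u v => by simp only [h]⟩
  · exact ⟨fun a b c => by simp only [h], fun a => by simp only [h],
      fun a b u v => by simp only [h]⟩
  · exact ⟨fun a b c => by simp only [h]; exact S1 a b c,
      fun a => by simp only [h]; exact S2 a,
      fun a b u v => by simp only [h]; exact S3 a b u v⟩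
  · exact ⟨fun a b c => by simp only [h]; exact (S1 c b a).symm,
      fun a => by simp only [h]; exact S2 a,
      fun a b u v => by simp only [h]; exact S3 v u b a⟩
  · exact ⟨fun a b c => by simp only [h]; exact sandT1 S1 S2 S3 a b c,
      fun a => by simp only [h]; rw [S2 a, S2 a],
      fun a b u v => by simp only [h]; exact sandT3 S1 S2 S3 a b u v⟩
  · exact ⟨fun a b c => by simp only [h]; exact (sandT1 S1 S2 S3 c b a).symm,
      fun a => by simp only [h]; rw [S2 a, S2 a],
      fun a b u v => by simp only [h]; exact sandT3 S1 S2 S3 v u b a⟩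
end

section
/- Let A be a set with a binary operation · satisfying (S1) x·(y·z) = (x·y)·z, (S2) x·x = x, (S3) (x·y)·(u·v) = (x·u)·(y·v) for all elements, and (S4) for all x, y ∈ A, x·y = y·x implies x = y. Then for every binary term t over the signature {·} with term function t^A, and for all a, b ∈ A: if t^A(a, b) = t^A(b, a) then a = b. That is, the quasi-identity (S4) is satisfied as a hyper-quasi-identity in the quasivariety defined by (S1)–(S4). -/
/-- Normal forms for binary terms in a band generated by two elements. -/
inductive NF : Type
  | A | B | AB | BA | ABA | BAB

def NF.interp {α : Type*} (m : α → α → α) : NF → α → α → α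
  | .A, a, _ => a
  | .B, _, b => b
  | .AB, a, b => m a b
  | .BA, a, b => m b a
  | .ABA, a, b => m (m a b) a
  | .BAB, a, b => m (m b a) b

def NF.mul : NF → NF → NF
  | .A, .A => .A
  | .A, .B => .AB
  | .A, .AB => .AB
  | .A, .BA => .ABA
  | .A, .ABA => .ABA
  | .A, .BAB => .AB
  | .B, .A => .BA
  | .B, .B => .B
  | .B, .AB => .BAB
  | .B, .BA => .BA
  | .B, .ABA => .BA
  | .B, .BAB => .BAB
  | .AB, .A => .ABA
  | .AB, .B => .AB
  | .AB, .AB => .AB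
  | .AB, .BA => .ABA
  | .AB, .ABA => .ABA
  | .AB, .BAB => .AB
  | .BA, .A => .BA
  | .BA, .B => .BAB
  | .BA, .AB => .BAB
  | .BA, .BA => .BA
  | .BA, .ABA => .BA
  | .BA, .BAB => .BAB
  | .ABA, .A => .ABA
  | .ABA, .B => .AB
  | .ABA, .AB => .AB
  | .ABA, .BA => .ABA
  | .ABA, .ABA => .ABA
  | .ABA, .BAB => .AB
  | .BAB, .A => .BA
  | .BAB, .B => .BAB
  | .BAB, .AB => .BAB
  | .BAB, .BA => .BA
  | .BAB, .ABA => .BA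
  | .BAB, .BAB => .BAB

/-- In any algebra `(A, m)` satisfying (S1)-(S4), every binary
term function `t^A` again satisfies (S4): the quasi-identity (S4) holds as a
hyper-quasi-identity in the quasivariety defined by (S1)-(S4). -/
theorem hyperquasiidentity_S4 {A : Type*} (m : A → A → A)
    (S1 : ∀ x y z : A, m x (m y z) = m (m x y) z)
    (S2 : ∀ x : A, m x x = x)
    (S3 : ∀ x y u v : A, m (m x y) (m u v) = m (m x u) (m y v))
    (S4 : ∀ x y : A, m x y = m y x → x = y)
    (t : BTerm) :
    ∀ a b : A, t.eval m a b = t.eval m b a → a = b := by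
  have r1 : ∀ w z : A, m (m w z) z = m w z := by
    intro w z; rw [← S1, S2]
  have r2 : ∀ x y : A, m (m (m x y) x) y = m x y := by
    intro x y
    calc m (m (m x y) x) y = m (m x y) (m x y) := by rw [S1]
    _ = m x y := S2 _
  have r2' : ∀ x y : A, m x (m y (m x y)) = m x y := by
    intro x y; rw [S1, S1]; exact r2 x y
  have r3 : ∀ w x y : A, m (m (m (m w x) y) x) y = m (m w x) y := by
    intro w x y
    simp only [← S1, r2']
  have interp_mul : ∀ (n1 n2 : NF) (a b : A),
      m (n1.interp m a b) (n2.interp m a b) = (n1.mul n2).interp m a b := by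
    intro n1 n2 a b
    cases n1 <;> cases n2 <;>
      simp only [NF.interp, NF.mul, S1, S2, r1, r2, r3]
  have key : ∀ t : BTerm, ∃ n : NF, ∀ a b : A, t.eval m a b = n.interp m a b := by
    intro t
    induction t with
    | x => exact ⟨.A, fun _ _ => rfl⟩
    | y => exact ⟨.B, fun _ _ => rfl⟩
    | op p q ihp ihq =>
      obtain ⟨n1, h1⟩ := ihp
      obtain ⟨n2, h2⟩ := ihq
      exact ⟨n1.mul n2, fun a b => by
        simp only [BTerm.eval, h1, h2, interp_mul]⟩
  intro a b h
  obtain ⟨n, hn⟩ := key t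
  rw [hn a b, hn b a] at h
  cases n with
  | A => exact h
  | B => exact h.symm
  | AB => exact S4 a b h
  | BA => exact S4 a b h.symm
  | ABA =>
    simp only [NF.interp] at h
    have h2 : m (m a b) (m b a) = m (m b a) (m a b) := by
      rw [S1, r1, S1, r1]; exact h
    exact S4 a b (S4 (m a b) (m b a) h2)
  | BAB =>
    simp only [NF.interp] at h
    have h2 : m (m a b) (m b a) = m (m b a) (m a b) := by
      rw [S1, r1, S1, r1]; exact h.symm
    exact S4 a b (S4 (m a b) (m b a) h2)
end

section
/- Let A be a set with a binary operation · satisfying (S1) x·(y·z) = (x·y)·z, (S2) x·x = x, (S3) (x·y)·(u·v) = (x·u)·(y·v) for all elements, and (S4) for all x, y ∈ A, x·y = y·x implies x = y. Then for every binary term t over the signature {·}, the derived algebra (A, t^A), with binary operation (a, b) ↦ t^A(a, b), also satisfies (S1), (S2), (S3), and (S4). In particular, the quasivariety defined by (S1)–(S4) is solid. -/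
/-!
(S1), (S2) and (S4) say that `(A, ·)` is an anticommutative band, and such a band is rectangular:
`x·y·z = x·z`. In a rectangular band every term collapses to the product of its leftmost and its
rightmost variable, so `t^A` is one of `(a, b) ↦ a`, `b`, `a·b`, `b·a`. Each of these is again a
rectangular band operation, and every rectangular band satisfies (S1)–(S4).
-/

section

variable {A : Type*}

/-- Equivalent to the usual definition (an idempotent semigroup with `x·y·x = x`). -/
structure IsRectangularBand (m : A → A → A) : Prop where
  idem : ∀ a, m a a = a
  drop_middle_left : ∀ a b c, m (m a b) c = m a c
  drop_middle_right : ∀ a b c, m a (m b c) = m a c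

namespace IsRectangularBand

variable {m : A → A → A}

theorem assoc (h : IsRectangularBand m) (a b c : A) : m a (m b c) = m (m a b) c := by
  rw [h.drop_middle_left, h.drop_middle_right]

theorem medial (h : IsRectangularBand m) (a b u v : A) :
    m (m a b) (m u v) = m (m a u) (m b v) := by
  simp only [h.drop_middle_left, h.drop_middle_right]

theorem eq_of_comm (h : IsRectangularBand m) {a b : A} (hab : m a b = m b a) : a = b :=
  calc a = m a (m b a) := by rw [h.drop_middle_right, h.idem]
    _ = m b (m a b) := by rw [← hab, h.drop_middle_right, hab, h.drop_middle_right]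
    _ = b := by rw [h.drop_middle_right, h.idem]

theorem flip (h : IsRectangularBand m) : IsRectangularBand (fun a b => m b a) where
  idem := h.idem
  drop_middle_left a b c := h.drop_middle_right c b a
  drop_middle_right a b c := h.drop_middle_left c b a

theorem fst : IsRectangularBand (fun a (_ : A) => a) :=
  ⟨fun _ => rfl, fun _ _ _ => rfl, fun _ _ _ => rfl⟩

theorem snd : IsRectangularBand (fun (_ : A) b => b) :=
  ⟨fun _ => rfl, fun _ _ _ => rfl, fun _ _ _ => rfl⟩

theorem of_assoc_of_idem_of_anticomm (assoc : ∀ a b c, m a (m b c) = m (m a b) c)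
    (idem : ∀ a, m a a = a) (anticomm : ∀ a b, m a b = m b a → a = b) :
    IsRectangularBand m := by
  have aba : ∀ a b, m (m a b) a = a := by
    intro a b
    -- `a` and `a·b·a` commute, both products being `a·b·a`.
    have left : m a (m (m a b) a) = m (m a b) a := by rw [assoc, assoc, idem]
    have right : m (m (m a b) a) a = m (m a b) a := by rw [← assoc, idem]
    exact (anticomm _ _ (left.trans right.symm)).symm
  have drop_middle_right : ∀ a b c, m a (m b c) = m a c := fun a b c =>
    calc m a (m b c) = m a (m b (m (m c a) c)) := by rw [aba]
      _ = m (m (m a (m b c)) a) c := by simp only [assoc]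
      _ = m a c := by rw [aba]
  refine ⟨idem, fun a b c => ?_, drop_middle_right⟩
  rw [← assoc, drop_middle_right]

end IsRectangularBand

namespace BTerm

def leftmost : BTerm → BTerm
  | x => x
  | y => y
  | op p _ => p.leftmost

def rightmost : BTerm → BTerm
  | x => x
  | y => y
  | op _ q => q.rightmost

theorem leftmost_eq_x_or_y (t : BTerm) : t.leftmost = x ∨ t.leftmost = y := by
  induction t with
  | x => exact .inl rfl
  | y => exact .inr rfl
  | op p _ ih => exact ih

theorem rightmost_eq_x_or_y (t : BTerm) : t.rightmost = x ∨ t.rightmost = y := by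
  induction t with
  | x => exact .inl rfl
  | y => exact .inr rfl
  | op _ q _ ih => exact ih

variable {m : A → A → A}

theorem eval_eq_leftmost_mul_rightmost (h : IsRectangularBand m) (t : BTerm) (a b : A) :
    t.eval m a b = m (t.leftmost.eval m a b) (t.rightmost.eval m a b) := by
  induction t with
  | x => exact (h.idem a).symm
  | y => exact (h.idem b).symm
  | op p q ihp ihq =>
    rw [eval, ihp, ihq, h.drop_middle_left, h.drop_middle_right]
    rfl

theorem eval_eq_fst_or_snd_or_self_or_flip (h : IsRectangularBand m) (t : BTerm) :
    t.eval m = (fun a _ => a) ∨ t.eval m = (fun _ b => b) ∨ t.eval m = m ∨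
      t.eval m = fun a b => m b a := by
  have ht : t.eval m = fun a b => m (t.leftmost.eval m a b) (t.rightmost.eval m a b) :=
    funext₂ (eval_eq_leftmost_mul_rightmost h t)
  rcases t.leftmost_eq_x_or_y with hl | hl <;> rcases t.rightmost_eq_x_or_y with hr | hr <;>
    simp only [ht, hl, hr, eval, h.idem] <;> tauto

end BTerm

theorem IsRectangularBand.eval {m : A → A → A} (h : IsRectangularBand m) (t : BTerm) :
    IsRectangularBand (t.eval m) := by
  rcases t.eval_eq_fst_or_snd_or_self_or_flip h with ht | ht | ht | ht <;> rw [ht]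
  exacts [fst, snd, h, h.flip]

end

theorem derived_algebra_satisfies_S1_S4_general {A : Type*} (m : A → A → A)
    (S1 : ∀ x y z : A, m x (m y z) = m (m x y) z)
    (S2 : ∀ x : A, m x x = x)
    (S4 : ∀ x y : A, m x y = m y x → x = y)
    (t : BTerm) :
    (∀ a b c : A, t.eval m a (t.eval m b c) = t.eval m (t.eval m a b) c) ∧
    (∀ a : A, t.eval m a a = a) ∧
    (∀ a b u v : A,
      t.eval m (t.eval m a b) (t.eval m u v) = t.eval m (t.eval m a u) (t.eval m b v)) ∧
    (∀ a b : A, t.eval m a b = t.eval m b a → a = b) := by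
  have ht := (IsRectangularBand.of_assoc_of_idem_of_anticomm S1 S2 S4).eval t
  exact ⟨ht.assoc, ht.idem, ht.medial, fun _ _ => ht.eq_of_comm⟩

/-- In any algebra `(A, m)` satisfying (S1)-(S4), every derived
algebra `(A, t^A)` also satisfies (S1)-(S4): the quasivariety defined by (S1)-(S4)
is solid. -/
theorem derived_algebra_satisfies_S1_S4 {A : Type*} (m : A → A → A)
    (S1 : ∀ x y z : A, m x (m y z) = m (m x y) z)
    (S2 : ∀ x : A, m x x = x)
    (S3 : ∀ x y u v : A, m (m x y) (m u v) = m (m x u) (m y v))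
    (S4 : ∀ x y : A, m x y = m y x → x = y)
    (t : BTerm) :
    (∀ a b c : A, t.eval m a (t.eval m b c) = t.eval m (t.eval m a b) c) ∧
    (∀ a : A, t.eval m a a = a) ∧
    (∀ a b u v : A,
      t.eval m (t.eval m a b) (t.eval m u v) = t.eval m (t.eval m a u) (t.eval m b v)) ∧
    (∀ a b : A, t.eval m a b = t.eval m b a → a = b) :=
  derived_algebra_satisfies_S1_S4_general m S1 S2 S4 t
end
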